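/- The utility function u_M fulfills cost-aware neutrality: let E=(A,V,c,l) be a budgeting scenario and a_i, a_j ∈ A two projects with c(a_i)=c(a_j). For a set S ⊆ A, let S_{i↔j} denote S with a_i and a_j swapped (a_i ∈ S_{i↔j} iff a_j ∈ S, a_j ∈ S_{i↔j} iff a_i ∈ S, and membership of any other project is unchanged), and let E_{i↔j}=(A,V_{i↔j},c,l) be the scenario in which every voter's approval set A_k is replaced by (A_k)_{i↔j}. Then for every S ⊆ A, u_M(S,E) = u_M(S_{i↔j}, E_{i↔j}). -/
import Mathlib


open Finset

/-- A participatory budgeting scenario `E = (A, V, c, l)`: a finite set of projects,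
a finite nonempty family of voters each with an approval set of cost at most the budget. -/
structure Scenario (α ι : Type*) [DecidableEq α] where
  projects : Finset α
  voters : Finset ι
  voters_nonempty : voters.Nonempty
  cost : α → ℕ
  budget : ℕ
  approval : ι → Finset α
  approval_subset : ∀ i ∈ voters, approval i ⊆ projects
  approval_feasible : ∀ i ∈ voters, ∑ a ∈ approval i, cost a ≤ budget

variable {α ι : Type*} [DecidableEq α]

/-- Appearance rate `r(S,V)`: the fraction of voters whose approval set contains `S`. -/
noncomputable def rate (E : Scenario α ι) (S : Finset α) : ℝ :=
  ((E.voters.filter fun i => S ⊆ E.approval i).card : ℝ) / (E.voters.card : ℝ)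

/-- The Möbius transform `m(·,E)`: `m(∅,E) = 0`, `m({a},E) = c(a)` and, for `|S| ≥ 2`,
`m(S,E) = max((r(S,V) - ∏_{a∈S} r({a},V))·c(S), max_{a∈S}(-∑_{C⊊S, a∈C} m(C,E)))`. -/
noncomputable def mobius (E : Scenario α ι) : Finset α → ℝ := fun S =>
  if h2 : 2 ≤ S.card then
    max ((rate E S - ∏ a ∈ S, rate E {a}) * (∑ a ∈ S, (E.cost a : ℝ)))
      (S.sup' (Finset.card_pos.mp (by omega)) fun a =>
        - ∑ C ∈ (S.powerset.filter fun C => C ≠ S ∧ a ∈ C).attach,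
            mobius E C.1)
  else ∑ a ∈ S, (E.cost a : ℝ)
termination_by S => S.card
decreasing_by
  have hC := C.2
  simp only [Finset.mem_filter, Finset.mem_powerset] at hC
  exact Finset.card_lt_card (hC.1.ssubset_of_ne hC.2.1)

/-- The utility function `u_M(S,E) = ∑_{C ⊆ S} m(C,E)`. -/
noncomputable def uM (E : Scenario α ι) (S : Finset α) : ℝ :=
  ∑ C ∈ S.powerset, mobius E C

section helpers

variable {α ι : Type*} [DecidableEq α]

lemma swap_cost_pt (E : Scenario α ι) (ai aj : α) (hcosteq : E.cost ai = E.cost aj) (a : α) :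
    E.cost (Equiv.swap ai aj a) = E.cost a := by
  rcases eq_or_ne a ai with rfl | h1
  · simp [Equiv.swap_apply_left, hcosteq]
  rcases eq_or_ne a aj with rfl | h2
  · simp [Equiv.swap_apply_right, hcosteq]
  · rw [Equiv.swap_apply_of_ne_of_ne h1 h2]

lemma rate_swap (E E' : Scenario α ι) (ai aj : α)
    (hvoters : E'.voters = E.voters)
    (happ : ∀ k ∈ E.voters, E'.approval k = (E.approval k).image (Equiv.swap ai aj))
    (S : Finset α) :
    rate E' (S.image (Equiv.swap ai aj)) = rate E S := by
  unfold rate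
  rw [hvoters]
  have hfilt : (E.voters.filter fun i => S.image (Equiv.swap ai aj) ⊆ E'.approval i)
      = E.voters.filter fun i => S ⊆ E.approval i := by
    refine Finset.filter_congr fun i hi => ?_
    rw [happ i hi, Finset.image_subset_image_iff (Equiv.swap ai aj).injective]
  rw [hfilt]

lemma mobius_swap (E E' : Scenario α ι) (ai aj : α)
    (hcosteq : E.cost ai = E.cost aj) (hcost : E'.cost = E.cost)
    (hvoters : E'.voters = E.voters)
    (happ : ∀ k ∈ E.voters, E'.approval k = (E.approval k).image (Equiv.swap ai aj))
    (S : Finset α) :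
    mobius E' (S.image (Equiv.swap ai aj)) = mobius E S := by
  induction S using Finset.strongInductionOn with
  | _ S IH =>
    set σ := Equiv.swap ai aj with hσ
    have hinj : Function.Injective σ := σ.injective
    have hinjS : ∀ x ∈ S, ∀ y ∈ S, σ x = σ y → x = y := fun x _ y _ h => hinj h
    have hcard : (S.image σ).card = S.card := Finset.card_image_of_injective _ hinj
    have hcpt : ∀ a, E'.cost (σ a) = E.cost a := fun a => by
      rw [hcost]; exact swap_cost_pt E ai aj hcosteq a
    have hcostsum : ∑ a ∈ S.image σ, (E'.cost a : ℝ) = ∑ a ∈ S, (E.cost a : ℝ) := by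
      rw [Finset.sum_image hinjS]
      exact Finset.sum_congr rfl fun a _ => by rw [hcpt]
    rw [mobius, mobius]
    by_cases h2 : 2 ≤ S.card
    · rw [dif_pos (hcard ▸ h2), dif_pos h2]
      have hrate : rate E' (S.image σ) = rate E S := rate_swap E E' ai aj hvoters happ S
      have hprod : ∏ a ∈ S.image σ, rate E' {a} = ∏ a ∈ S, rate E {a} := by
        rw [Finset.prod_image hinjS]
        refine Finset.prod_congr rfl fun a _ => ?_
        have := rate_swap E E' ai aj hvoters happ {a}
        simpa using this
      rw [hrate, hprod, hcostsum]
      congr 1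
      have hne : (S.image σ).Nonempty := by
        rw [Finset.image_nonempty]; exact Finset.card_pos.mp (by omega)
      rw [Finset.sup'_image hne]
      refine Finset.sup'_congr _ rfl fun b hb => ?_
      simp only [Function.comp]
      congr 1
      rw [Finset.sum_attach _ (fun C => mobius E' C), Finset.sum_attach _ (fun C => mobius E C)]
      have hset : (S.image σ).powerset.filter (fun C => C ≠ S.image σ ∧ σ b ∈ C)
          = (S.powerset.filter fun C => C ≠ S ∧ b ∈ C).image (fun C => C.image σ) := by
        ext C
        simp only [Finset.mem_filter, Finset.mem_powerset, Finset.mem_image]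
        constructor
        · rintro ⟨hsub, hne', hmem⟩
          obtain ⟨D, hD, rfl⟩ := Finset.subset_image_iff.mp hsub
          refine ⟨D, ⟨hD, ?_, ?_⟩, rfl⟩
          · rintro rfl; exact hne' rfl
          · obtain ⟨x, hx, hxe⟩ := Finset.mem_image.mp hmem
            rwa [hinj hxe] at hx
        · rintro ⟨D, ⟨hD, hne', hmem⟩, rfl⟩
          refine ⟨Finset.image_subset_image hD, ?_, Finset.mem_image_of_mem _ hmem⟩
          intro h
          exact hne' (Finset.image_injective hinj h)
      rw [hset, Finset.sum_image (fun x _ y _ h => Finset.image_injective hinj h)]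
      refine Finset.sum_congr rfl fun C hC => ?_
      simp only [Finset.mem_filter, Finset.mem_powerset] at hC
      exact IH C (hC.1.ssubset_of_ne hC.2.1)
    · rw [dif_neg (hcard ▸ h2), dif_neg h2]
      exact hcostsum

end helpers

/-- `u_M` fulfills cost-aware neutrality: swapping two projects of equal cost in all
approval sets swaps their roles in the utility, i.e. `u_M(S,E) = u_M(S_{i↔j}, E_{i↔j})`. -/
theorem uM_cost_aware_neutrality (E E' : Scenario α ι) (ai aj : α)
    (hai : ai ∈ E.projects) (haj : aj ∈ E.projects)
    (hcosteq : E.cost ai = E.cost aj)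
    (hproj : E'.projects = E.projects) (hcost : E'.cost = E.cost)
    (hbudget : E'.budget = E.budget) (hvoters : E'.voters = E.voters)
    (happ : ∀ k ∈ E.voters, E'.approval k = (E.approval k).image (Equiv.swap ai aj))
    (S : Finset α) (hS : S ⊆ E.projects) :
    uM E S = uM E' (S.image (Equiv.swap ai aj)) := by
  set σ := Equiv.swap ai aj
  have hinj : Function.Injective σ := σ.injective
  have hpow : (S.image σ).powerset = S.powerset.image (fun C => C.image σ) := by
    ext C
    simp only [Finset.mem_powerset, Finset.mem_image]
    constructor
    · intro h
      obtain ⟨D, hD, rfl⟩ := Finset.subset_image_iff.mp h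
      exact ⟨D, hD, rfl⟩
    · rintro ⟨D, hD, rfl⟩
      exact Finset.image_subset_image hD
  unfold uM
  rw [hpow, Finset.sum_image (fun x _ y _ h => Finset.image_injective hinj h)]
  exact Finset.sum_congr rfl fun C _ =>
    (mobius_swap E E' ai aj hcosteq hcost hvoters happ C).symm
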